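/- Suppose liminf_{r→∞} f̊_r^m(χ) ≥ f̊^m(χ) for every χ ∈ [0,∞)^M and every m = 1,…,M. Then liminf_{r→∞} χ̂_r ≥ χ̂ componentwise. -/

import Mathlib

open MeasureTheory Filter Set Topology
open scoped ENNReal

/-- The fire-sales iteration `σ_(k)` (number of sold shares, not normalized by `n`):
`σ_(0) = 0` and `σ_(k+1)^m = ∑_i x_i^m ρ((ℓ_i + x_i · h(σ_(k)/n)) / c_i)`. -/
noncomputable def sigmaIter {M : ℕ} (ρ : ℝ → ℝ) (h : (Fin M → ℝ) → Fin M → ℝ)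
    (n : ℕ) (x : Fin n → Fin M → ℝ) (c : Fin n → ℝ≥0∞) (ℓ : Fin n → ℝ) :
    ℕ → Fin M → ℝ
  | 0 => 0
  | k + 1 => fun m =>
      ∑ i, x i m *
        ρ ((ℓ i + ∑ m', x i m' * h (fun m'' => sigmaIter ρ h n x c ℓ k m'' / (n : ℝ)) m') /
          (c i).toReal)

/-- `f^m(χ) = E[X^m ρ((L + X·h(χ))/C)] − χ^m`. -/
noncomputable def fFS {Ω : Type*} [MeasureSpace Ω] {M : ℕ} (ρ : ℝ → ℝ)
    (h : (Fin M → ℝ) → Fin M → ℝ) (X : Ω → Fin M → ℝ) (C : Ω → ℝ≥0∞) (L : Ω → ℝ)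
    (m : Fin M) (χ : Fin M → ℝ) : ℝ :=
  (∫ ω, X ω m * ρ ((L ω + ∑ m', X ω m' * h χ m') / (C ω).toReal)) - χ m

/-- `P = ∩_m {χ ∈ [0,∞)^M : f^m(χ) ≥ 0}`. -/
noncomputable def PsetFS {Ω : Type*} [MeasureSpace Ω] {M : ℕ} (ρ : ℝ → ℝ)
    (h : (Fin M → ℝ) → Fin M → ℝ) (X : Ω → Fin M → ℝ) (C : Ω → ℝ≥0∞) (L : Ω → ℝ) :
    Set (Fin M → ℝ) :=
  {χ | (∀ m, 0 ≤ χ m) ∧ ∀ m, 0 ≤ fFS ρ h X C L m χ}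

/-- `P₀`, the largest connected subset of `P` containing `0`. -/
noncomputable def P0FS {Ω : Type*} [MeasureSpace Ω] {M : ℕ} (ρ : ℝ → ℝ)
    (h : (Fin M → ℝ) → Fin M → ℝ) (X : Ω → Fin M → ℝ) (C : Ω → ℝ≥0∞) (L : Ω → ℝ) :
    Set (Fin M → ℝ) :=
  connectedComponentIn (PsetFS ρ h X C L) 0

/-- `χ*`, defined by `(χ*)^m = sup_{χ ∈ P₀} χ^m`. -/
noncomputable def chiStarFS {Ω : Type*} [MeasureSpace Ω] {M : ℕ} (ρ : ℝ → ℝ)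
    (h : (Fin M → ℝ) → Fin M → ℝ) (X : Ω → Fin M → ℝ) (C : Ω → ℝ≥0∞) (L : Ω → ℝ) :
    Fin M → ℝ :=
  fun m => sSup ((fun χ => χ m) '' P0FS ρ h X C L)

/-!
Write `G` for the sales map `χ ↦ E[X ρ̊((L + X·h(χ))/C)]`, so that `f̊ = G - id`, and let
`c = liminf χ̂_r`. If `y ≥ 0` lies eventually below `χ̂_r`, monotonicity of `G_r` gives
`f̊_r(y) ≤ χ̂_r - y`, so the hypothesis yields `G(y) ≤ c`. For `b = min(c, E[X])` and `t < 1`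
the vector `t • b` is eventually below `χ̂_r`, hence `G(t • b) ≤ b`; left-continuity of `ρ̊` and
dominated convergence let `t → 1`, so `G(b) ≤ b`. By Knaster–Tarski the monotone map `G` then has
a fixed point in `[0, b]`, and minimality gives `χ̂ ≤ b ≤ c`.
-/

section LeftLimit

variable {ρ ρc : ℝ → ℝ}
  (hρc : ∀ u : ℝ, 0 ≤ u → Tendsto (fun ε => ρ ((1 - ε) * u)) (𝓝[>] 0) (𝓝 (ρc u)))
include hρc

theorem leftLimit_mapsTo (hρ_mem : MapsTo ρ (Ici 0) (Icc 0 1)) : MapsTo ρc (Ici 0) (Icc 0 1) := by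
  intro u hu
  refine isClosed_Icc.mem_of_tendsto (hρc u hu) ?_
  filter_upwards [Ioo_mem_nhdsGT one_pos] with ε hε
  exact hρ_mem (mul_nonneg (show (0:ℝ) ≤ 1 - ε by linarith [hε.2]) hu)

theorem leftLimit_monotoneOn (hρ_mono : MonotoneOn ρ (Ici 0)) : MonotoneOn ρc (Ici 0) := by
  intro u hu v hv huv
  refine le_of_tendsto_of_tendsto (hρc u hu) (hρc v hv) ?_
  filter_upwards [Ioo_mem_nhdsGT one_pos] with ε hε
  have hε' : (0:ℝ) ≤ 1 - ε := by linarith [hε.2]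
  exact hρ_mono (mul_nonneg hε' hu) (mul_nonneg hε' hv) (mul_le_mul_of_nonneg_left huv hε')

theorem le_leftLimit (hρ_mono : MonotoneOn ρ (Ici 0)) {u v : ℝ} (hv : 0 ≤ v) (hvu : v < u) :
    ρ v ≤ ρc u := by
  have hu : 0 ≤ u := hv.trans hvu.le
  have hscale : Tendsto (fun ε : ℝ => (1 - ε) * u) (𝓝[>] 0) (𝓝 u) := by
    have : Tendsto (fun ε : ℝ => (1 - ε) * u) (𝓝 0) (𝓝 ((1 - 0) * u)) :=
      ((continuous_const.sub continuous_id).mul continuous_const).tendsto 0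
    simpa using this.mono_left nhdsWithin_le_nhds
  refine ge_of_tendsto (hρc u hu) ?_
  filter_upwards [Ioo_mem_nhdsGT one_pos, hscale.eventually (lt_mem_nhds hvu)] with ε hε hvε
  exact hρ_mono hv (mul_nonneg (by linarith [hε.2]) hu) hvε.le

theorem leftLimit_continuousWithinAt (hρ_mono : MonotoneOn ρ (Ici 0)) {u : ℝ} (hu : 0 ≤ u) :
    ContinuousWithinAt ρc (Icc 0 u) u := by
  rcases hu.eq_or_lt with rfl | hu_pos
  · rw [Icc_self]
    exact continuousWithinAt_singleton
  refine tendsto_order.2 ⟨fun a ha => ?_, fun b hb => ?_⟩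
  · have hsmall : ∀ᶠ ε in 𝓝[>] (0:ℝ), ε ∈ Ioo (0:ℝ) 1 := Ioo_mem_nhdsGT one_pos
    obtain ⟨ε, hε, haε⟩ := (hsmall.and ((hρc u hu).eventually (lt_mem_nhds ha))).exists
    have hεu : (1 - ε) * u < u := by nlinarith [hε.1]
    filter_upwards [self_mem_nhdsWithin, nhdsWithin_le_nhds (lt_mem_nhds hεu)] with v hv hεv
    rcases hv.2.eq_or_lt with rfl | hvu
    · exact ha
    · exact haε.trans_le (le_leftLimit hρc hρ_mono (by nlinarith [hε.2]) hεv)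
  · filter_upwards [self_mem_nhdsWithin] with v hv
    exact (leftLimit_monotoneOn hρc hρ_mono hv.1 hu hv.2).trans_lt hb

end LeftLimit

theorem Filter.coe_le_liminf_coe_iff {α : Type*} {l : Filter α} {a : α → ℝ} {x : ℝ} :
    (x : EReal) ≤ liminf (fun r => (a r : EReal)) l ↔ ∀ y < x, ∀ᶠ r in l, y < a r := by
  rw [le_liminf_iff]
  refine ⟨fun h y hy => (h y (EReal.coe_lt_coe hy)).mono fun r hr => EReal.coe_lt_coe_iff.1 hr,
    fun h y hy => ?_⟩
  induction y using EReal.rec with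
  | bot => exact Eventually.of_forall fun r => EReal.bot_lt_coe _
  | coe y => exact (h y (EReal.coe_lt_coe_iff.1 hy)).mono fun r hr => EReal.coe_lt_coe hr
  | top => exact absurd hy (not_lt.2 le_top)

theorem MonotoneOn.exists_fixedPoint_mem_Icc {α : Type*} [ConditionallyCompleteLattice α]
    {f : α → α} {a b : α} (hab : a ≤ b) (hf : MonotoneOn f (Icc a b)) (ha : a ≤ f a)
    (hb : f b ≤ b) : ∃ x ∈ Icc a b, f x = x := by
  have : Fact (a ≤ b) := ⟨hab⟩
  let F : Icc a b →o Icc a b :=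
    { toFun := fun x => ⟨f x, ha.trans (hf ⟨le_rfl, hab⟩ x.2 x.2.1),
        (hf x.2 ⟨hab, le_rfl⟩ x.2.2).trans hb⟩
      monotone' := fun x y hxy => hf x.2 y.2 hxy }
  exact ⟨F.lfp, F.lfp.2, congrArg Subtype.val F.map_lfp⟩

section FixedPointComparison

variable {ι : Type*} {G : (ι → ℝ) → ι → ℝ} {Gs : ℕ → (ι → ℝ) → ι → ℝ} {χs : ℕ → ι → ℝ}

theorem coe_map_le_liminf_of_eventually_le (hGs_mono : ∀ r, MonotoneOn (Gs r) (Ici 0))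
    (hχs_nonneg : ∀ r, 0 ≤ χs r) (hχs_fixed : ∀ r, Gs r (χs r) = χs r)
    {y : ι → ℝ} (hy : 0 ≤ y) (hy_le : ∀ᶠ r in atTop, y ≤ χs r) {i : ι}
    (hlim : ((G y i - y i : ℝ) : EReal) ≤
      liminf (fun r => ((Gs r y i - y i : ℝ) : EReal)) atTop) :
    (G y i : EReal) ≤ liminf (fun r => (χs r i : EReal)) atTop := by
  rw [coe_le_liminf_coe_iff] at hlim ⊢
  intro z hz
  filter_upwards [hlim (z - y i) (by linarith), hy_le] with r hr hyr
  have hmono := hGs_mono r hy (hχs_nonneg r) hyr i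
  rw [hχs_fixed r] at hmono
  linarith

theorem eventually_smul_le_of_coe_le_liminf [Finite ι] (hχs_nonneg : ∀ r, 0 ≤ χs r)
    {b : ι → ℝ} (hb : 0 ≤ b)
    (hb_le : ∀ i, (b i : EReal) ≤ liminf (fun r => (χs r i : EReal)) atTop)
    {t : ℝ} (ht : t ∈ Ico (0:ℝ) 1) : ∀ᶠ r in atTop, t • b ≤ χs r := by
  simp only [Pi.le_def, eventually_all]
  intro i
  rcases (hb i).eq_or_lt with hbi | hbi
  · exact Eventually.of_forall fun r => by simpa [← hbi] using hχs_nonneg r i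
  · filter_upwards [coe_le_liminf_coe_iff.1 (hb_le i) (t * b i)
      (mul_lt_of_lt_one_left hbi ht.2)] with r hr
    exact hr.le

theorem coe_le_liminf_of_fixedPoint_le [Finite ι] {B χ : ι → ℝ}
    (hG_mono : MonotoneOn G (Ici 0)) (hG_nonneg : ∀ x, 0 ≤ x → 0 ≤ G x)
    (hG_le : ∀ x, 0 ≤ x → G x ≤ B)
    (hG_left : ∀ x, 0 ≤ x → Tendsto (fun t : ℝ => G (t • x)) (𝓝[<] 1) (𝓝 (G x)))
    (hGs_mono : ∀ r, MonotoneOn (Gs r) (Ici 0))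
    (hχs_nonneg : ∀ r, 0 ≤ χs r) (hχs_fixed : ∀ r, Gs r (χs r) = χs r)
    (hχ_le : ∀ x, 0 ≤ x → G x = x → χ ≤ x)
    (hlim : ∀ x, 0 ≤ x → ∀ i,
      ((G x i - x i : ℝ) : EReal) ≤ liminf (fun r => ((Gs r x i - x i : ℝ) : EReal)) atTop)
    (i : ι) : (χ i : EReal) ≤ liminf (fun r => (χs r i : EReal)) atTop := by
  set c : ι → EReal := fun i => liminf (fun r => (χs r i : EReal)) atTop
  have hc : ∀ i, 0 ≤ c i := fun i =>
    le_liminf_of_le (by isBoundedDefault)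
      (Eventually.of_forall fun r => EReal.coe_nonneg.2 (hχs_nonneg r i))
  have hB : 0 ≤ B := (hG_nonneg 0 le_rfl).trans (hG_le 0 le_rfl)
  -- Truncating at `B` keeps `b` real where `c = ⊤`.
  set b : ι → ℝ := fun i => (min (c i) (B i)).toReal
  have hb_coe : ∀ i, (b i : EReal) = min (c i) (B i) := fun i =>
    EReal.coe_toReal ((min_le_right _ _).trans_lt (EReal.coe_lt_top _)).ne
      (EReal.bot_lt_zero.trans_le (le_min (hc i) (EReal.coe_nonneg.2 (hB i)))).ne'
  have hb : 0 ≤ b := fun i => EReal.toReal_nonneg (le_min (hc i) (EReal.coe_nonneg.2 (hB i)))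
  have hb_le : ∀ i, (b i : EReal) ≤ c i := fun i => (hb_coe i).trans_le (min_le_left _ _)
  have hGb : G b ≤ b := by
    refine le_of_tendsto (hG_left b hb) ?_
    filter_upwards [Ico_mem_nhdsLT one_pos] with t ht i
    have htb : 0 ≤ t • b := smul_nonneg ht.1 hb
    rw [← EReal.coe_le_coe_iff, hb_coe]
    exact le_min (coe_map_le_liminf_of_eventually_le hGs_mono hχs_nonneg hχs_fixed htb
      (eventually_smul_le_of_coe_le_liminf hχs_nonneg hb hb_le ht) (hlim _ htb i))
      (EReal.coe_le_coe (hG_le _ htb i))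
  obtain ⟨x, hx, hGx⟩ := (hG_mono.mono Icc_subset_Ici_self).exists_fixedPoint_mem_Icc hb
    (hG_nonneg 0 le_rfl) hGb
  exact (EReal.coe_le_coe ((hχ_le x hx.1 hGx).trans hx.2 i)).trans (hb_le i)

end FixedPointComparison

theorem MonotoneOn.measurable_comp_of_nonneg {Ω : Type*} [MeasurableSpace Ω] {f : ℝ → ℝ}
    (hf : MonotoneOn f (Ici 0)) {g : Ω → ℝ} (hg : Measurable g) (hg0 : ∀ ω, 0 ≤ g ω) :
    Measurable fun ω => f (g ω) := by
  have hmono : Monotone fun u => f (max u 0) := fun a b hab =>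
    hf (le_max_right a 0) (le_max_right b 0) (max_le_max hab le_rfl)
  convert hmono.measurable.comp hg using 2 with ω
  simp [max_eq_left (hg0 ω)]

section SalesMap

variable {Ω ι : Type*} [Fintype ι]

structure IsBalanceSheet [MeasureSpace Ω] (X : Ω → ι → ℝ) (C : Ω → ℝ≥0∞) (L : Ω → ℝ) :
    Prop where
  X_nonneg : ∀ ω i, 0 ≤ X ω i
  L_nonneg : ∀ ω, 0 ≤ L ω
  measurable_X : ∀ i, Measurable fun ω => X ω i
  measurable_C : Measurable C
  measurable_L : Measurable L
  integrable_X : ∀ i, Integrable fun ω => X ω i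

noncomputable def saleArg (h : (ι → ℝ) → ι → ℝ) (X : Ω → ι → ℝ) (C : Ω → ℝ≥0∞) (L : Ω → ℝ)
    (χ : ι → ℝ) (ω : Ω) : ℝ :=
  (L ω + ∑ j, X ω j * h χ j) / (C ω).toReal

noncomputable def salesMap [MeasureSpace Ω] (ρ : ℝ → ℝ) (h : (ι → ℝ) → ι → ℝ)
    (X : Ω → ι → ℝ) (C : Ω → ℝ≥0∞) (L : Ω → ℝ) (χ : ι → ℝ) : ι → ℝ :=
  fun i => ∫ ω, X ω i * ρ (saleArg h X C L χ ω)

theorem fFS_eq_salesMap_sub [MeasureSpace Ω] {M : ℕ} (ρ : ℝ → ℝ) (h : (Fin M → ℝ) → Fin M → ℝ)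
    (X : Ω → Fin M → ℝ) (C : Ω → ℝ≥0∞) (L : Ω → ℝ) (m : Fin M) (χ : Fin M → ℝ) :
    fFS ρ h X C L m χ = salesMap ρ h X C L χ m - χ m :=
  rfl

variable {ρ : ℝ → ℝ} {h : (ι → ℝ) → ι → ℝ} {X : Ω → ι → ℝ} {C : Ω → ℝ≥0∞} {L : Ω → ℝ}

theorem saleArg_nonneg (hh : ∀ χ, 0 ≤ χ → 0 ≤ h χ) (hX : ∀ ω i, 0 ≤ X ω i)
    (hL : ∀ ω, 0 ≤ L ω) {χ : ι → ℝ} (hχ : 0 ≤ χ) (ω : Ω) : 0 ≤ saleArg h X C L χ ω :=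
  div_nonneg (add_nonneg (hL ω) (Finset.sum_nonneg fun j _ =>
    mul_nonneg (hX ω j) (hh χ hχ j))) ENNReal.toReal_nonneg

theorem saleArg_mono (hX : ∀ ω i, 0 ≤ X ω i) {χ χ' : ι → ℝ} (hle : h χ ≤ h χ') (ω : Ω) :
    saleArg h X C L χ ω ≤ saleArg h X C L χ' ω := by
  refine div_le_div_of_nonneg_right (add_le_add_right ?_ _) ENNReal.toReal_nonneg
  exact Finset.sum_le_sum fun j _ => mul_le_mul_of_nonneg_left (hle j) (hX ω j)

theorem measurable_saleArg [MeasurableSpace Ω] (hX : ∀ i, Measurable fun ω => X ω i)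
    (hC : Measurable C) (hL : Measurable L) (χ : ι → ℝ) : Measurable (saleArg h X C L χ) :=
  (hL.add (Finset.measurable_sum _ fun j _ => (hX j).mul_const _)).div hC.ennreal_toReal

variable [MeasureSpace Ω]

theorem measurable_salesIntegrand (hρ_mono : MonotoneOn ρ (Ici 0))
    (hh : ∀ χ, 0 ≤ χ → 0 ≤ h χ) (hB : IsBalanceSheet X C L) {χ : ι → ℝ} (hχ : 0 ≤ χ) (i : ι) :
    Measurable fun ω => X ω i * ρ (saleArg h X C L χ ω) :=
  (hB.measurable_X i).mul (hρ_mono.measurable_comp_of_nonneg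
    (measurable_saleArg hB.measurable_X hB.measurable_C hB.measurable_L χ)
    (saleArg_nonneg hh hB.X_nonneg hB.L_nonneg hχ))

theorem norm_salesIntegrand_le (hρ_mem : MapsTo ρ (Ici 0) (Icc 0 1))
    (hh : ∀ χ, 0 ≤ χ → 0 ≤ h χ) (hB : IsBalanceSheet X C L) {χ : ι → ℝ} (hχ : 0 ≤ χ)
    (i : ι) (ω : Ω) : ‖X ω i * ρ (saleArg h X C L χ ω)‖ ≤ X ω i := by
  have hρ := hρ_mem (saleArg_nonneg (C := C) hh hB.X_nonneg hB.L_nonneg hχ ω)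
  rw [Real.norm_of_nonneg (mul_nonneg (hB.X_nonneg ω i) hρ.1)]
  exact mul_le_of_le_one_right (hB.X_nonneg ω i) hρ.2

theorem integrable_salesIntegrand (hρ_mono : MonotoneOn ρ (Ici 0))
    (hρ_mem : MapsTo ρ (Ici 0) (Icc 0 1)) (hh : ∀ χ, 0 ≤ χ → 0 ≤ h χ)
    (hB : IsBalanceSheet X C L) {χ : ι → ℝ} (hχ : 0 ≤ χ) (i : ι) :
    Integrable fun ω => X ω i * ρ (saleArg h X C L χ ω) :=
  (hB.integrable_X i).mono' (measurable_salesIntegrand hρ_mono hh hB hχ i).aestronglyMeasurable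
    (Eventually.of_forall (norm_salesIntegrand_le hρ_mem hh hB hχ i))

theorem salesMap_nonneg (hρ_mem : MapsTo ρ (Ici 0) (Icc 0 1)) (hh : ∀ χ, 0 ≤ χ → 0 ≤ h χ)
    (hB : IsBalanceSheet X C L) {χ : ι → ℝ} (hχ : 0 ≤ χ) : 0 ≤ salesMap ρ h X C L χ := fun i =>
  integral_nonneg fun ω => mul_nonneg (hB.X_nonneg ω i)
    (hρ_mem (saleArg_nonneg hh hB.X_nonneg hB.L_nonneg hχ ω)).1

theorem salesMap_le_integral (hρ_mono : MonotoneOn ρ (Ici 0))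
    (hρ_mem : MapsTo ρ (Ici 0) (Icc 0 1)) (hh : ∀ χ, 0 ≤ χ → 0 ≤ h χ)
    (hB : IsBalanceSheet X C L) {χ : ι → ℝ} (hχ : 0 ≤ χ) :
    salesMap ρ h X C L χ ≤ fun i => ∫ ω, X ω i := fun i =>
  integral_mono (integrable_salesIntegrand hρ_mono hρ_mem hh hB hχ i) (hB.integrable_X i)
    fun ω => (le_abs_self _).trans (norm_salesIntegrand_le hρ_mem hh hB hχ i ω)

theorem monotoneOn_salesMap (hρ_mono : MonotoneOn ρ (Ici 0))
    (hρ_mem : MapsTo ρ (Ici 0) (Icc 0 1)) (hh_mono : MonotoneOn h (Ici 0))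
    (hh : ∀ χ, 0 ≤ χ → 0 ≤ h χ) (hB : IsBalanceSheet X C L) :
    MonotoneOn (salesMap ρ h X C L) (Ici 0) := fun _ hχ _ hχ' hle i =>
  integral_mono (integrable_salesIntegrand hρ_mono hρ_mem hh hB hχ i)
    (integrable_salesIntegrand hρ_mono hρ_mem hh hB hχ' i) fun ω =>
    mul_le_mul_of_nonneg_left (hρ_mono (saleArg_nonneg hh hB.X_nonneg hB.L_nonneg hχ ω)
      (saleArg_nonneg hh hB.X_nonneg hB.L_nonneg hχ' ω)
      (saleArg_mono hB.X_nonneg (hh_mono hχ hχ' hle) ω)) (hB.X_nonneg ω i)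

theorem tendsto_salesMap_smul (hρ_mono : MonotoneOn ρ (Ici 0)) (hρ_mem : MapsTo ρ (Ici 0) (Icc 0 1))
    (hρ_cont : ∀ u, 0 ≤ u → ContinuousWithinAt ρ (Icc 0 u) u)
    (hh_mono : MonotoneOn h (Ici 0)) (hh : ∀ χ, 0 ≤ χ → 0 ≤ h χ)
    (hh_cont : ContinuousOn h (Ici 0)) (hB : IsBalanceSheet X C L) {χ : ι → ℝ} (hχ : 0 ≤ χ) :
    Tendsto (fun t : ℝ => salesMap ρ h X C L (t • χ)) (𝓝[<] 1) (𝓝 (salesMap ρ h X C L χ)) := by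
  have hsmall : ∀ᶠ t in 𝓝[<] (1:ℝ), 0 ≤ t • χ ∧ t • χ ≤ χ := by
    filter_upwards [Ico_mem_nhdsLT one_pos] with t ht
    exact ⟨smul_nonneg ht.1 hχ, fun i => mul_le_of_le_one_left (hχ i) ht.2.le⟩
  have hscale : Tendsto (fun t : ℝ => t • χ) (𝓝[<] 1) (𝓝[Ici 0] χ) := by
    refine tendsto_nhdsWithin_of_tendsto_nhds_of_eventually_within _ ?_
      (hsmall.mono fun t ht => ht.1)
    have : Tendsto (fun t : ℝ => t • χ) (𝓝 1) (𝓝 ((1:ℝ) • χ)) :=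
      (continuous_id.smul continuous_const).tendsto 1
    simpa using this.mono_left nhdsWithin_le_nhds
  have hh_lim := tendsto_pi_nhds.1 ((hh_cont χ hχ).tendsto.comp hscale)
  have harg : ∀ ω, Tendsto (fun t : ℝ => saleArg h X C L (t • χ) ω) (𝓝[<] 1)
      (𝓝[Icc 0 (saleArg h X C L χ ω)] (saleArg h X C L χ ω)) := fun ω => by
    refine tendsto_nhdsWithin_of_tendsto_nhds_of_eventually_within _ ?_ ?_
    · exact (tendsto_const_nhds.add
        (tendsto_finsetSum _ fun j _ => (hh_lim j).const_mul _)).div_const _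
    · filter_upwards [hsmall] with t ht
      exact ⟨saleArg_nonneg hh hB.X_nonneg hB.L_nonneg ht.1 ω,
        saleArg_mono hB.X_nonneg (hh_mono ht.1 hχ ht.2) ω⟩
  refine tendsto_pi_nhds.2 fun i => tendsto_integral_filter_of_dominated_convergence
    (fun ω => X ω i) ?_ ?_ (hB.integrable_X i) ?_
  · filter_upwards [hsmall] with t ht
    exact (measurable_salesIntegrand hρ_mono hh hB ht.1 i).aestronglyMeasurable
  · filter_upwards [hsmall] with t ht
    exact Eventually.of_forall (norm_salesIntegrand_le hρ_mem hh hB ht.1 i)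
  · exact Eventually.of_forall fun ω => ((hρ_cont _ (saleArg_nonneg hh hB.X_nonneg hB.L_nonneg
      hχ ω)).tendsto.comp (harg ω)).const_mul _

end SalesMap

theorem stmt_14_general {Ω : Type*} [MeasureSpace Ω] {M : ℕ}
    (ρ : ℝ → ℝ) (hρ_mono : MonotoneOn ρ (Set.Ici 0))
    (hρ_mem : ∀ u ∈ Set.Ici (0:ℝ), ρ u ∈ Set.Icc (0:ℝ) 1)
    (ρc : ℝ → ℝ)
    (hρc : ∀ u : ℝ, 0 ≤ u → Tendsto (fun ε => ρ ((1 - ε) * u)) (𝓝[>] 0) (𝓝 (ρc u)))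
    (h : (Fin M → ℝ) → Fin M → ℝ)
    (hh_cont : ∀ m, ContinuousOn (fun χ => h χ m) {χ : Fin M → ℝ | ∀ m', 0 ≤ χ m'})
    (hh_mono : ∀ m (χ χ' : Fin M → ℝ), (∀ m', 0 ≤ χ m') → (∀ m', χ m' ≤ χ' m') → h χ m ≤ h χ' m)
    (hh_mem : ∀ m (χ : Fin M → ℝ), (∀ m', 0 ≤ χ m') → h χ m ∈ Set.Icc (0:ℝ) 1)
    (Xs : ℕ → Ω → Fin M → ℝ) (Cs : ℕ → Ω → ℝ≥0∞) (Ls : ℕ → Ω → ℝ)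
    (hXs_nonneg : ∀ r ω m, 0 ≤ Xs r ω m)
    (hLs_nonneg : ∀ r ω, 0 ≤ Ls r ω)
    (hXs_meas : ∀ r m, Measurable fun ω => Xs r ω m)
    (hCs_meas : ∀ r, Measurable (Cs r)) (hLs_meas : ∀ r, Measurable (Ls r))
    (hXs_int : ∀ r m, Integrable fun ω => Xs r ω m)
    (X : Ω → Fin M → ℝ) (C : Ω → ℝ≥0∞) (L : Ω → ℝ)
    (hX_nonneg : ∀ ω m, 0 ≤ X ω m)
    (hL_nonneg : ∀ ω, 0 ≤ L ω)
    (hX_meas : ∀ m, Measurable fun ω => X ω m)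
    (hC_meas : Measurable C) (hL_meas : Measurable L)
    (hX_int : ∀ m, Integrable fun ω => X ω m)
    (χhats : ℕ → Fin M → ℝ)
    (hχhats_nonneg : ∀ r m, 0 ≤ χhats r m)
    (hχhats_root : ∀ r m, fFS ρc h (Xs r) (Cs r) (Ls r) m (χhats r) = 0)
    (χhat : Fin M → ℝ)
    (hχhat_min : ∀ χ' : Fin M → ℝ, (∀ m, 0 ≤ χ' m) → (∀ m, fFS ρc h X C L m χ' = 0) →
      ∀ m, χhat m ≤ χ' m)
    (hliminf : ∀ χ : Fin M → ℝ, (∀ m, 0 ≤ χ m) → ∀ m,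
      ((fFS ρc h X C L m χ : ℝ) : EReal) ≤
        Filter.liminf (fun r => ((fFS ρc h (Xs r) (Cs r) (Ls r) m χ : ℝ) : EReal)) atTop) :
    ∀ m, ((χhat m : ℝ) : EReal) ≤ Filter.liminf (fun r => ((χhats r m : ℝ) : EReal)) atTop := by
  simp only [fFS_eq_salesMap_sub, sub_eq_zero] at hχhats_root hχhat_min hliminf
  have hρc_mono := leftLimit_monotoneOn hρc hρ_mono
  have hρc_mem := leftLimit_mapsTo hρc hρ_mem
  have hρc_cont : ∀ u, 0 ≤ u → ContinuousWithinAt ρc (Icc 0 u) u := fun _ hu =>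
    leftLimit_continuousWithinAt hρc hρ_mono hu
  have hh_monoOn : MonotoneOn h (Ici 0) := fun χ hχ _ _ hle m => hh_mono m _ _ hχ hle
  have hh_nonneg : ∀ χ, 0 ≤ χ → 0 ≤ h χ := fun χ hχ m => (hh_mem m χ hχ).1
  have hB : IsBalanceSheet X C L := ⟨hX_nonneg, hL_nonneg, hX_meas, hC_meas, hL_meas, hX_int⟩
  have hBs : ∀ r, IsBalanceSheet (Xs r) (Cs r) (Ls r) := fun r =>
    ⟨hXs_nonneg r, hLs_nonneg r, hXs_meas r, hCs_meas r, hLs_meas r, hXs_int r⟩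
  exact coe_le_liminf_of_fixedPoint_le (Gs := fun r => salesMap ρc h (Xs r) (Cs r) (Ls r))
    (monotoneOn_salesMap hρc_mono hρc_mem hh_monoOn hh_nonneg hB)
    (fun _ hx => salesMap_nonneg hρc_mem hh_nonneg hB hx)
    (fun _ hx => salesMap_le_integral hρc_mono hρc_mem hh_nonneg hB hx)
    (fun _ hx => tendsto_salesMap_smul hρc_mono hρc_mem hρc_cont hh_monoOn hh_nonneg
      (continuousOn_pi.2 hh_cont) hB hx)
    (fun r => monotoneOn_salesMap hρc_mono hρc_mem hh_monoOn hh_nonneg (hBs r))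
    hχhats_nonneg (fun r => funext (hχhats_root r))
    (fun x hx hGx => hχhat_min x hx (congrFun hGx)) hliminf

/-- If `liminf_{r→∞} f̊_r^m(χ) ≥ f̊^m(χ)` pointwise on `[0,∞)^M` for every `m`, then the smallest
joint roots satisfy `liminf_{r→∞} χ̂_r ≥ χ̂` componentwise (in the extended reals). -/
theorem stmt_14 {Ω : Type*} [MeasureSpace Ω] [IsProbabilityMeasure (volume : Measure Ω)] {M : ℕ}
    (ρ : ℝ → ℝ) (hρ_mono : MonotoneOn ρ (Set.Ici 0))
    (hρ_rc : ∀ u ∈ Set.Ici (0:ℝ), ContinuousWithinAt ρ (Set.Ici u) u)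
    (hρ_zero : ρ 0 = 0) (hρ_mem : ∀ u ∈ Set.Ici (0:ℝ), ρ u ∈ Set.Icc (0:ℝ) 1)
    (hρ_plateau : ∀ u : ℝ, 1 ≤ u → ρ u = ρ 1)
    (ρc : ℝ → ℝ)
    (hρc : ∀ u : ℝ, 0 ≤ u → Tendsto (fun ε => ρ ((1 - ε) * u)) (𝓝[>] 0) (𝓝 (ρc u)))
    (h : (Fin M → ℝ) → Fin M → ℝ)
    (hh_cont : ∀ m, ContinuousOn (fun χ => h χ m) {χ : Fin M → ℝ | ∀ m', 0 ≤ χ m'})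
    (hh_mono : ∀ m (χ χ' : Fin M → ℝ), (∀ m', 0 ≤ χ m') → (∀ m', χ m' ≤ χ' m') → h χ m ≤ h χ' m)
    (hh_mem : ∀ m (χ : Fin M → ℝ), (∀ m', 0 ≤ χ m') → h χ m ∈ Set.Icc (0:ℝ) 1)
    (Xs : ℕ → Ω → Fin M → ℝ) (Ss : ℕ → Ω → ℝ) (Cs : ℕ → Ω → ℝ≥0∞) (Ls : ℕ → Ω → ℝ)
    (hXs_nonneg : ∀ r ω m, 0 ≤ Xs r ω m) (hSs_nonneg : ∀ r ω, 0 ≤ Ss r ω)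
    (hCs_pos : ∀ r ω, 0 < Cs r ω) (hLs_nonneg : ∀ r ω, 0 ≤ Ls r ω)
    (hXs_meas : ∀ r m, Measurable fun ω => Xs r ω m) (hSs_meas : ∀ r, Measurable (Ss r))
    (hCs_meas : ∀ r, Measurable (Cs r)) (hLs_meas : ∀ r, Measurable (Ls r))
    (hXs_int : ∀ r m, Integrable fun ω => Xs r ω m) (hSs_int : ∀ r, Integrable (Ss r))
    (X : Ω → Fin M → ℝ) (S : Ω → ℝ) (C : Ω → ℝ≥0∞) (L : Ω → ℝ)
    (hX_nonneg : ∀ ω m, 0 ≤ X ω m) (hS_nonneg : ∀ ω, 0 ≤ S ω) (hC_pos : ∀ ω, 0 < C ω)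
    (hL_nonneg : ∀ ω, 0 ≤ L ω)
    (hX_meas : ∀ m, Measurable fun ω => X ω m) (hS_meas : Measurable S)
    (hC_meas : Measurable C) (hL_meas : Measurable L)
    (hX_int : ∀ m, Integrable fun ω => X ω m) (hS_int : Integrable S)
    (χhats : ℕ → Fin M → ℝ)
    (hχhats_nonneg : ∀ r m, 0 ≤ χhats r m)
    (hχhats_root : ∀ r m, fFS ρc h (Xs r) (Cs r) (Ls r) m (χhats r) = 0)
    (hχhats_min : ∀ r (χ' : Fin M → ℝ), (∀ m, 0 ≤ χ' m) →
      (∀ m, fFS ρc h (Xs r) (Cs r) (Ls r) m χ' = 0) → ∀ m, χhats r m ≤ χ' m)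
    (χhat : Fin M → ℝ) (hχhat_nonneg : ∀ m, 0 ≤ χhat m)
    (hχhat_root : ∀ m, fFS ρc h X C L m χhat = 0)
    (hχhat_min : ∀ χ' : Fin M → ℝ, (∀ m, 0 ≤ χ' m) → (∀ m, fFS ρc h X C L m χ' = 0) →
      ∀ m, χhat m ≤ χ' m)
    (hliminf : ∀ χ : Fin M → ℝ, (∀ m, 0 ≤ χ m) → ∀ m,
      ((fFS ρc h X C L m χ : ℝ) : EReal) ≤
        Filter.liminf (fun r => ((fFS ρc h (Xs r) (Cs r) (Ls r) m χ : ℝ) : EReal)) atTop) :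
    ∀ m, ((χhat m : ℝ) : EReal) ≤ Filter.liminf (fun r => ((χhats r m : ℝ) : EReal)) atTop :=
  stmt_14_general ρ hρ_mono hρ_mem ρc hρc h hh_cont hh_mono hh_mem Xs Cs Ls hXs_nonneg hLs_nonneg
    hXs_meas hCs_meas hLs_meas hXs_int X C L hX_nonneg hL_nonneg hX_meas hC_meas hL_meas hX_int
    χhats hχhats_nonneg hχhats_root χhat hχhat_min hliminf
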